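/- Let G be a discrete group, N a normal subgroup, and A a G-graded *-algebra. Form the iterated crossed product C = A⋊G⋊G⋊(G/N), spanned by generators (a_r, s, t, uN), with operations induced by iterating the crossed-product construction: the first crossed product is by the grading, the second by the dual action δ̂_t(a_r,s) = (a_r, st⁻¹) together with the canonical grading of a crossed product by an action (degree of (x, t) is t), and the third is the restricted crossed product by the second dual action. Form also D = (A⋊(G/N))⋊G⋊G, using the decomposition grading on A⋊(G/N) (generator (a_s,tN) has degree s), its crossed product by G, the dual action, and the crossed product by G again. Then the map on generators (a_r, s, t, uN) ↦ (a_r, s t u N, s, t) extends to a *-algebra isomorphism C ≅ D. -/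

import Mathlib

/-!
Statement 3 (Proposition 3.2 of Kaliszewski–Quigg): for a discrete group `G`,
`N ⊴ G`, and a `G`-graded *-algebra `A`, the map on generators
`(a_r, s, t, uN) ↦ (a_r, s t uN, s, t)` extends to a *-algebra isomorphism
`A ⋊ G ⋊ G ⋊ (G/N) ≅ (A ⋊ (G/N)) ⋊ G ⋊ G`.

The iterated crossed product `A ⋊ G ⋊ G ⋊ (G/N)` is modelled on
`(G × G × G × G ⧸ N) →₀ A`, with generator `(a_r, s, t, uN)` at index
`(r, s, t, uN)`; iterating the crossed-product constructions on generators gives: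
  mul: `(a,r,s,t,uN)(b,r',s',t',u'N) = (ab, rr', s't⁻¹, tt', u'N)`
        if `s = r' s' t⁻¹` and `uN = t' u'N`, else `0`;
  star: `(a,r,s,t,uN)* = (a*, r⁻¹, rst, t⁻¹, t·uN)`.
Similarly `(A ⋊ (G/N)) ⋊ G ⋊ G` (decomposition grading on `A ⋊ (G/N)`, then the
crossed product by `G`, the dual action, and the crossed product by `G` again) is
modelled on `(G × (G ⧸ N) × G × G) →₀ A`, with
  mul: `(a,r,sN,t,w)(b,r',s'N,t',w') = (ab, rr', s'N, t'w⁻¹, ww')`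
        if `t = r' t' w⁻¹` and `sN = r'·s'N`, else `0`;
  star: `(a,r,sN,t,w)* = (a*, r⁻¹, r·sN, rtw, w⁻¹)`.
-/

attribute [local instance] Classical.propDecidable

noncomputable section

variable {G : Type*} [Group G] {A : Type*} [Ring A] [Algebra ℂ A] [StarRing A]
  [StarModule ℂ A] {N : Subgroup G} [N.Normal]

/-- `A` is a `G`-graded *-algebra with grading subspaces `𝒜 s`. -/
structure IsStarGrading (𝒜 : G → Submodule ℂ A) : Prop where
  one_mem : (1 : A) ∈ 𝒜 1
  mul_mem : ∀ ⦃s t : G⦄ ⦃a b : A⦄, a ∈ 𝒜 s → b ∈ 𝒜 t → a * b ∈ 𝒜 (s * t)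
  star_mem : ∀ ⦃s : G⦄ ⦃a : A⦄, a ∈ 𝒜 s → star a ∈ 𝒜 s⁻¹
  indep : iSupIndep 𝒜
  span_top : ⨆ s, 𝒜 s = ⊤

/-- Multiplication on `A ⋊ G ⋊ G ⋊ (G/N)`. -/
def c4Mul (f g : (G × G × G × G ⧸ N) →₀ A) : (G × G × G × G ⧸ N) →₀ A :=
  f.sum fun p a => g.sum fun q b =>
    if p.2.1 = q.1 * q.2.1 * p.2.2.1⁻¹ ∧ p.2.2.2 = (q.2.2.1 : G ⧸ N) * q.2.2.2 then
      Finsupp.single (p.1 * q.1, q.2.1 * p.2.2.1⁻¹, p.2.2.1 * q.2.2.1, q.2.2.2) (a * b)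
    else 0

/-- Involution on `A ⋊ G ⋊ G ⋊ (G/N)`. -/
def c4Star (f : (G × G × G × G ⧸ N) →₀ A) : (G × G × G × G ⧸ N) →₀ A :=
  f.sum fun p a =>
    Finsupp.single (p.1⁻¹, p.1 * p.2.1 * p.2.2.1, p.2.2.1⁻¹,
      (p.2.2.1 : G ⧸ N) * p.2.2.2) (star a)

/-- Multiplication on `(A ⋊ (G/N)) ⋊ G ⋊ G`. -/
def d4Mul (f g : (G × (G ⧸ N) × G × G) →₀ A) : (G × (G ⧸ N) × G × G) →₀ A :=
  f.sum fun p a => g.sum fun q b =>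
    if p.2.2.1 = q.1 * q.2.2.1 * p.2.2.2⁻¹ ∧ p.2.1 = (q.1 : G ⧸ N) * q.2.1 then
      Finsupp.single (p.1 * q.1, q.2.1, q.2.2.1 * p.2.2.2⁻¹, p.2.2.2 * q.2.2.2) (a * b)
    else 0

/-- Involution on `(A ⋊ (G/N)) ⋊ G ⋊ G`. -/
def d4Star (f : (G × (G ⧸ N) × G × G) →₀ A) : (G × (G ⧸ N) × G × G) →₀ A :=
  f.sum fun p a =>
    Finsupp.single (p.1⁻¹, (p.1 : G ⧸ N) * p.2.1, p.1 * p.2.2.1 * p.2.2.2,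
      p.2.2.2⁻¹) (star a)

/-- The map `(a_r, s, t, uN) ↦ (a_r, s t uN, s, t)` (linearly extended). -/
def moveGN (f : (G × G × G × G ⧸ N) →₀ A) : (G × (G ⧸ N) × G × G) →₀ A :=
  f.sum fun p a =>
    Finsupp.single (p.1, ((p.2.1 * p.2.2.1 : G) : G ⧸ N) * p.2.2.2,
      p.2.1, p.2.2.1) a

/-
Both iterated crossed products are spanned by generators indexed by `G × G × G × G ⧸ N` and
`G × G ⧸ N × G × G` respectively, and `moveGN` is the map induced by a bijection of these index
sets. Product and involution are given generator by generator, so everything reduces to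
checking that this bijection matches the composability conditions, the index of a product and
the index of an adjoint on the two sides; each is an identity in `G` and `G ⧸ N`.
-/

namespace Finsupp

variable {α β M M' P : Type*} [AddCommMonoid M] [AddCommMonoid M'] [AddCommMonoid P]
  {e : α → β}

theorem mapDomain_sum_of_injective (he : Function.Injective e) (f : α →₀ M)
    {Φ : α → M → α →₀ P} {Ψ : β → M → β →₀ P}
    (hΦΨ : ∀ p a, mapDomain e (Φ p a) = Ψ (e p) a) :
    mapDomain e (f.sum Φ) = (mapDomain e f).sum Ψ := by
  rw [mapDomain_sum, sum_mapDomain_index_inj he]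
  simp only [hΦΨ]

theorem mapDomain_sum_sum_of_injective (he : Function.Injective e) (f : α →₀ M) (g : α →₀ M')
    {Φ : α → α → M → M' → α →₀ P} {Ψ : β → β → M → M' → β →₀ P}
    (hΦΨ : ∀ p q a b, mapDomain e (Φ p q a b) = Ψ (e p) (e q) a b) :
    mapDomain e (f.sum fun p a => g.sum fun q b => Φ p q a b) =
      (mapDomain e f).sum fun p a => (mapDomain e g).sum fun q b => Ψ p q a b :=
  mapDomain_sum_of_injective he f fun p a =>
    mapDomain_sum_of_injective he g fun q b => hΦΨ p q a b

end Finsupp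

def moveGNIndex : (G × G × G × G ⧸ N) ≃ (G × (G ⧸ N) × G × G) where
  toFun p := (p.1, ((p.2.1 * p.2.2.1 : G) : G ⧸ N) * p.2.2.2, p.2.1, p.2.2.1)
  invFun q := (q.1, q.2.2.1, q.2.2.2, (((q.2.2.1 * q.2.2.2 : G) : G ⧸ N))⁻¹ * q.2.1)
  left_inv p := by simp [mul_assoc]
  right_inv q := by simp [mul_assoc]

omit [StarRing A] [StarModule ℂ A] in
theorem moveGN_eq_domLCongr :
    moveGN = ⇑(Finsupp.domLCongr (M := A) (R := ℂ) (moveGNIndex (G := G) (N := N))) := by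
  funext f
  rw [Finsupp.domLCongr_apply, Finsupp.domCongr_apply, Finsupp.equivMapDomain_eq_mapDomain]
  rfl

theorem moveGNIndex_mul_cond_iff (p q : G × G × G × G ⧸ N) :
    (p.2.1 = q.1 * q.2.1 * p.2.2.1⁻¹ ∧ p.2.2.2 = (q.2.2.1 : G ⧸ N) * q.2.2.2) ↔
      ((moveGNIndex p).2.2.1 = (moveGNIndex q).1 * (moveGNIndex q).2.2.1 *
          (moveGNIndex p).2.2.2⁻¹ ∧
        (moveGNIndex p).2.1 = ((moveGNIndex q).1 : G ⧸ N) * (moveGNIndex q).2.1) := by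
  obtain ⟨r, s, t, u⟩ := p
  obtain ⟨r', s', t', u'⟩ := q
  -- once `s = r' s' t⁻¹`, the two coset conditions differ by left multiplication by `r' s'`
  refine and_congr_right fun hs => ?_
  dsimp only [moveGNIndex, Equiv.coe_fn_mk] at hs ⊢
  rw [hs, inv_mul_cancel_right, QuotientGroup.mk_mul, QuotientGroup.mk_mul, mul_assoc,
    mul_assoc, mul_right_inj, mul_right_inj]

omit [Algebra ℂ A] [StarRing A] [StarModule ℂ A] in
theorem moveGN_c4Mul (f g : (G × G × G × G ⧸ N) →₀ A) :
    moveGN (c4Mul f g) = d4Mul (moveGN f) (moveGN g) := by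
  refine Finsupp.mapDomain_sum_sum_of_injective moveGNIndex.injective f g fun p q a b => ?_
  rw [apply_ite (Finsupp.mapDomain moveGNIndex), Finsupp.mapDomain_single, Finsupp.mapDomain_zero]
  refine if_congr (moveGNIndex_mul_cond_iff p q) ?_ rfl
  obtain ⟨r, s, t, u⟩ := p
  obtain ⟨r', s', t', u'⟩ := q
  simp [moveGNIndex, mul_assoc]

omit [Algebra ℂ A] [StarModule ℂ A] in
theorem moveGN_c4Star (f : (G × G × G × G ⧸ N) →₀ A) :
    moveGN (c4Star f) = d4Star (moveGN f) := by
  refine Finsupp.mapDomain_sum_of_injective moveGNIndex.injective f fun p a => ?_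
  rw [Finsupp.mapDomain_single]
  simp [moveGNIndex, mul_assoc]

theorem moveGN_is_star_algebra_isomorphism
    (𝒜 : G → Submodule ℂ A) :
    -- `moveGN` is the stated map on generators
    (∀ (r s t : G) (u : G ⧸ N) (a : A), a ∈ 𝒜 r →
      moveGN (Finsupp.single (r, s, t, u) a) =
        Finsupp.single (r, ((s * t : G) : G ⧸ N) * u, s, t) a) ∧
    -- it is a linear bijection
    Function.Bijective (moveGN (G := G) (A := A) (N := N)) ∧
    (∀ f g : (G × G × G × G ⧸ N) →₀ A, moveGN (f + g) = moveGN f + moveGN g) ∧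
    (∀ (c : ℂ) (f : (G × G × G × G ⧸ N) →₀ A), moveGN (c • f) = c • moveGN f) ∧
    -- it is multiplicative and *-preserving
    (∀ f g : (G × G × G × G ⧸ N) →₀ A,
      moveGN (c4Mul f g) = d4Mul (moveGN f) (moveGN g)) ∧
    (∀ f : (G × G × G × G ⧸ N) →₀ A, moveGN (c4Star f) = d4Star (moveGN f)) := by
  refine ⟨fun r s t u a _ => Finsupp.mapDomain_single, ?_, ?_, ?_, moveGN_c4Mul, moveGN_c4Star⟩
    <;> rw [moveGN_eq_domLCongr]
  exacts [LinearEquiv.bijective _, map_add _, map_smul _]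

end
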